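/- The dual functional h : ℝ^n → ℝ is convex and continuously differentiable, and its gradient is given by ∇h(W) = −BΦ(W) + CW + G for every W ∈ ℝ^n. -/

import Mathlib

open scoped RealInnerProductSpace

/-!
The dual functional is `h W = -g W + ½⟪C W, W⟫ + ⟪G, W⟫`, where `g W` is the minimum over `K` of
`V ↦ ½⟪A V, V⟫ - ⟪F, V⟫ + ⟪W, B V⟫`, a family of functions affine in `W`. Comparing with the
minimizer at a neighbouring parameter shows that `B (Φ W)` is a supergradient of the concave
function `g` at `W`. The variational inequality for the minimizers together with coercivity of `A`
makes `Φ` (Lipschitz) continuous, and a concave function with a continuous field of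
supergradients is differentiable with exactly that gradient.
-/

/-- The Lagrangian `L(V, W) = ½⟨AV, V⟩ − ⟨F, V⟩ + ⟨BV − G, W⟩ − ½⟨CW, W⟩`. -/
noncomputable def Lag {m n : ℕ}
    (A : EuclideanSpace ℝ (Fin m) →L[ℝ] EuclideanSpace ℝ (Fin m))
    (B : EuclideanSpace ℝ (Fin m) →L[ℝ] EuclideanSpace ℝ (Fin n))
    (C : EuclideanSpace ℝ (Fin n) →L[ℝ] EuclideanSpace ℝ (Fin n))
    (F : EuclideanSpace ℝ (Fin m)) (G : EuclideanSpace ℝ (Fin n))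
    (V : EuclideanSpace ℝ (Fin m)) (W : EuclideanSpace ℝ (Fin n)) : ℝ :=
  (1 / 2 : ℝ) * ⟪A V, V⟫ - ⟪F, V⟫ + ⟪B V - G, W⟫ - (1 / 2 : ℝ) * ⟪C W, W⟫

section

variable {E : Type*} [NormedAddCommGroup E] [InnerProductSpace ℝ E]

theorem exists_pos_mul_sq_norm_le_inner_self [FiniteDimensional ℝ E] (A : E →L[ℝ] E)
    (hA : ∀ x, x ≠ 0 → 0 < ⟪A x, x⟫) : ∃ α : ℝ, 0 < α ∧ ∀ x, α * ‖x‖ ^ 2 ≤ ⟪A x, x⟫ := by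
  rcases subsingleton_or_nontrivial E with hE | hE
  · exact ⟨1, one_pos, fun x => by simp [Subsingleton.elim x 0]⟩
  obtain ⟨x₀, hx₀, hmin⟩ := (isCompact_sphere (0 : E) 1).exists_isMinOn
    (NormedSpace.sphere_nonempty.2 zero_le_one)
    (by fun_prop : Continuous fun x : E => ⟪A x, x⟫).continuousOn
  have hx₀1 : ‖x₀‖ = 1 := by simpa using hx₀
  refine ⟨⟪A x₀, x₀⟫, hA x₀ (norm_ne_zero_iff.1 (by simp [hx₀1])), fun x => ?_⟩
  rcases eq_or_ne x 0 with rfl | hx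
  · simp
  have hxn : 0 < ‖x‖ := norm_pos_iff.2 hx
  have hu : ‖x‖⁻¹ • x ∈ Metric.sphere (0 : E) 1 := by
    simp [norm_smul, hxn.ne']
  have : ⟪A x₀, x₀⟫ ≤ ⟪A (‖x‖⁻¹ • x), ‖x‖⁻¹ • x⟫ := hmin hu
  simp only [map_smul, real_inner_smul_left, real_inner_smul_right] at this
  calc ⟪A x₀, x₀⟫ * ‖x‖ ^ 2 ≤ ‖x‖⁻¹ * (‖x‖⁻¹ * ⟪A x, x⟫) * ‖x‖ ^ 2 := by gcongr
    _ = ⟪A x, x⟫ := by field_simp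

theorem two_mul_inner_le_of_isMinOn_quadratic {A : E →L[ℝ] E} {b P V : E} {K : Set E}
    (hK : Convex ℝ K) (hP : P ∈ K) (hV : V ∈ K)
    (hmin : IsMinOn (fun V => (1 / 2 : ℝ) * ⟪A V, V⟫ - ⟪b, V⟫) K P) :
    2 * ⟪b, V - P⟫ ≤ ⟪A P, V - P⟫ + ⟪A (V - P), P⟫ := by
  have hd := ((A.hasFDerivAt.inner ℝ (hasFDerivAt_id P)).const_mul (1 / 2 : ℝ)).sub
    ((innerSL ℝ b).hasFDerivAt (x := P))
  have := hmin.localize.hasFDerivWithinAt_nonneg hd.hasFDerivWithinAt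
    (sub_mem_posTangentConeAt_of_segment_subset (hK.segment_subset hP hV))
  simp only [sub_apply, smul_apply, ContinuousLinearMap.comp_apply,
    ContinuousLinearMap.prod_apply, ContinuousLinearMap.id_apply, fderivInnerCLM_apply,
    coe_innerSL_apply, id_eq, smul_eq_mul, sub_nonneg] at this
  linarith

theorem inner_sub_le_of_isMinOn_quadratic {A : E →L[ℝ] E} {b b' P P' : E} {K : Set E}
    (hK : Convex ℝ K) (hP : P ∈ K) (hP' : P' ∈ K)
    (hmin : IsMinOn (fun V => (1 / 2 : ℝ) * ⟪A V, V⟫ - ⟪b, V⟫) K P)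
    (hmin' : IsMinOn (fun V => (1 / 2 : ℝ) * ⟪A V, V⟫ - ⟪b', V⟫) K P') :
    ⟪A (P' - P), P' - P⟫ ≤ ⟪b' - b, P' - P⟫ := by
  have h := two_mul_inner_le_of_isMinOn_quadratic hK hP hP' hmin
  have h' := two_mul_inner_le_of_isMinOn_quadratic hK hP' hP hmin'
  rw [← neg_sub P' P] at h'
  simp only [map_sub, map_neg, inner_sub_left, inner_sub_right, inner_neg_left,
    inner_neg_right] at h h' ⊢
  linarith [real_inner_comm (A P) P', real_inner_comm (A P') P]

theorem mul_norm_sub_le_of_isMinOn_quadratic {A : E →L[ℝ] E} {α : ℝ} {b b' P P' : E}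
    {K : Set E}
    (hA : ∀ x, α * ‖x‖ ^ 2 ≤ ⟪A x, x⟫) (hK : Convex ℝ K) (hP : P ∈ K) (hP' : P' ∈ K)
    (hmin : IsMinOn (fun V => (1 / 2 : ℝ) * ⟪A V, V⟫ - ⟪b, V⟫) K P)
    (hmin' : IsMinOn (fun V => (1 / 2 : ℝ) * ⟪A V, V⟫ - ⟪b', V⟫) K P') :
    α * ‖P' - P‖ ≤ ‖b' - b‖ := by
  rcases (norm_nonneg (P' - P)).eq_or_lt with h0 | h0
  · rw [← h0, mul_zero]; exact norm_nonneg _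
  refine le_of_mul_le_mul_right ?_ h0
  calc α * ‖P' - P‖ * ‖P' - P‖ = α * ‖P' - P‖ ^ 2 := by ring
    _ ≤ ⟪A (P' - P), P' - P⟫ := hA _
    _ ≤ ⟪b' - b, P' - P⟫ := inner_sub_le_of_isMinOn_quadratic hK hP hP' hmin hmin'
    _ ≤ ‖b' - b‖ * ‖P' - P‖ := real_inner_le_norm _ _

theorem continuous_of_isMinOn_quadratic {ι : Type*} [TopologicalSpace ι] {A : E →L[ℝ] E}
    {α : ℝ} {K : Set E} {b Φ : ι → E} (hα : 0 < α) (hA : ∀ x, α * ‖x‖ ^ 2 ≤ ⟪A x, x⟫)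
    (hK : Convex ℝ K) (hb : Continuous b)
    (hΦ : ∀ i, Φ i ∈ K ∧ IsMinOn (fun V => (1 / 2 : ℝ) * ⟪A V, V⟫ - ⟪b i, V⟫) K (Φ i)) :
    Continuous Φ := by
  refine continuous_iff_continuousAt.2 fun i => tendsto_iff_norm_sub_tendsto_zero.2 ?_
  refine squeeze_zero (fun _ => norm_nonneg _) (fun j => ?_)
    (by simpa using (tendsto_iff_norm_sub_tendsto_zero.1 (hb.tendsto i)).div_const α)
  rw [le_div_iff₀' hα]
  exact mul_norm_sub_le_of_isMinOn_quadratic hA hK (hΦ i).1 (hΦ j).1 (hΦ i).2 (hΦ j).2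

section Supergradient

variable {g : E → ℝ} {u : E → E}

theorem concaveOn_univ_of_le_add_inner (hg : ∀ x y, g y ≤ g x + ⟪y - x, u x⟫) :
    ConcaveOn ℝ Set.univ g := by
  refine ⟨convex_univ, fun x _ y _ a b ha hb hab => ?_⟩
  set z := a • x + b • y
  have hz : a * ⟪x - z, u z⟫ + b * ⟪y - z, u z⟫ = 0 := by
    simp only [z, inner_sub_left, inner_add_left, real_inner_smul_left]
    linear_combination (-(a * ⟪x, u z⟫ + b * ⟪y, u z⟫)) * hab
  have := add_le_add (mul_le_mul_of_nonneg_left (hg z x) ha)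
    (mul_le_mul_of_nonneg_left (hg z y) hb)
  simp only [smul_eq_mul]
  linear_combination this + g z * hab + hz

theorem hasGradientAt_of_le_add_inner [CompleteSpace E]
    (hg : ∀ x y, g y ≤ g x + ⟪y - x, u x⟫) {x : E} (hu : ContinuousAt u x) :
    HasGradientAt g (u x) x := by
  -- the remainder `g y - g x - ⟪y - x, u x⟫` lies between `⟪y - x, u y - u x⟫` and `0`
  refine hasGradientAt_iff_isLittleO.2 (Asymptotics.isLittleO_iff.2 fun c hc => ?_)
  filter_upwards [hu.eventually (Metric.closedBall_mem_nhds (u x) hc)] with y hy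
  have hlow := hg y x
  rw [← neg_sub y x, inner_neg_left] at hlow
  rw [dist_eq_norm] at hy
  have hr : |⟪y - x, u y - u x⟫| ≤ ‖y - x‖ * c :=
    (abs_real_inner_le_norm _ _).trans (mul_le_mul_of_nonneg_left hy (norm_nonneg _))
  rw [inner_sub_right, abs_le] at hr
  rw [Real.norm_eq_abs, abs_le, real_inner_comm]
  constructor <;> linarith [hg x y]

end Supergradient

theorem convexOn_univ_inner_apply_self {C : E →L[ℝ] E} (hC : ∀ x, 0 ≤ ⟪C x, x⟫) :
    ConvexOn ℝ Set.univ fun x => ⟪C x, x⟫ := by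
  refine ⟨convex_univ, fun x _ y _ a b ha hb hab => ?_⟩
  have hab' : b = 1 - a := by linarith
  subst hab'
  have := mul_nonneg (mul_nonneg ha hb) (hC (x - y))
  simp only [map_add, map_sub, map_smul, inner_add_left, inner_add_right, inner_sub_left,
    inner_sub_right, real_inner_smul_left, real_inner_smul_right, smul_eq_mul] at this ⊢
  nlinarith

section Gradient

variable [CompleteSpace E] {f g : E → ℝ} {f' g' x : E}

theorem HasGradientAt.add (hf : HasGradientAt f f' x) (hg : HasGradientAt g g' x) :
    HasGradientAt (fun y => f y + g y) (f' + g') x := by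
  rw [hasGradientAt_iff_hasFDerivAt, map_add]
  exact hf.hasFDerivAt.add hg.hasFDerivAt

theorem HasGradientAt.neg (hf : HasGradientAt f f' x) :
    HasGradientAt (fun y => -f y) (-f') x := by
  rw [hasGradientAt_iff_hasFDerivAt, map_neg]
  exact hf.hasFDerivAt.neg

theorem hasGradientAt_inner_const (a : E) : HasGradientAt (fun y => ⟪a, y⟫) a x :=
  (InnerProductSpace.toDual ℝ E a).hasFDerivAt

theorem hasGradientAt_half_inner_apply_self {C : E →L[ℝ] E}
    (hC : (C : E →ₗ[ℝ] E).IsSymmetric) :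
    HasGradientAt (fun y => (1 / 2 : ℝ) * ⟪C y, y⟫) (C x) x := by
  rw [hasGradientAt_iff_hasFDerivAt]
  refine ((C.hasFDerivAt.inner ℝ (hasFDerivAt_id x)).const_mul (1 / 2 : ℝ)).congr_fderiv ?_
  ext y
  have hCyx : ⟪C y, x⟫ = ⟪C x, y⟫ := (hC y x).trans (real_inner_comm _ _)
  simp only [id_eq, smul_apply, ContinuousLinearMap.comp_apply, ContinuousLinearMap.prod_apply,
    ContinuousLinearMap.id_apply, fderivInnerCLM_apply, smul_eq_mul,
    InnerProductSpace.toDual_apply_apply, hCyx]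
  ring

theorem contDiff_one_of_hasGradientAt {u : E → E} (hf : ∀ x, HasGradientAt f (u x) x)
    (hu : Continuous u) : ContDiff ℝ 1 f :=
  contDiff_one_iff_hasFDerivAt.2
    ⟨fun x => InnerProductSpace.toDual ℝ E (u x),
      (InnerProductSpace.toDual ℝ E).continuous.comp hu, fun x => (hf x).hasFDerivAt⟩

end Gradient

end

theorem stmt_3_general {m n : ℕ}
    (A : EuclideanSpace ℝ (Fin m) →L[ℝ] EuclideanSpace ℝ (Fin m))
    (hApos : ∀ x : EuclideanSpace ℝ (Fin m), x ≠ 0 → 0 < ⟪A x, x⟫)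
    (B : EuclideanSpace ℝ (Fin m) →L[ℝ] EuclideanSpace ℝ (Fin n))
    (C : EuclideanSpace ℝ (Fin n) →L[ℝ] EuclideanSpace ℝ (Fin n))
    (hCsym : ∀ x y : EuclideanSpace ℝ (Fin n), ⟪C x, y⟫ = ⟪x, C y⟫)
    (hCpos : ∀ x : EuclideanSpace ℝ (Fin n), x ≠ 0 → 0 < ⟪C x, x⟫)
    (F : EuclideanSpace ℝ (Fin m)) (G : EuclideanSpace ℝ (Fin n))
    (K : Set (EuclideanSpace ℝ (Fin m)))
    (hKco : Convex ℝ K)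
    -- `Phi W` is the minimizer over `K` of `V ↦ ½⟨AV, V⟩ − ⟨F − BᵀW, V⟩`
    (Phi : EuclideanSpace ℝ (Fin n) → EuclideanSpace ℝ (Fin m))
    (hPhi : ∀ W : EuclideanSpace ℝ (Fin n), Phi W ∈ K ∧ ∀ V ∈ K,
      (1 / 2 : ℝ) * ⟪A (Phi W), Phi W⟫ - ⟪F - (ContinuousLinearMap.adjoint B) W, Phi W⟫ ≤
        (1 / 2 : ℝ) * ⟪A V, V⟫ - ⟪F - (ContinuousLinearMap.adjoint B) W, V⟫)
    -- the dual functional `h(W) = −L(Φ(W), W)`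
    (h : EuclideanSpace ℝ (Fin n) → ℝ)
    (hdual : ∀ W : EuclideanSpace ℝ (Fin n), h W = -Lag A B C F G (Phi W) W) :
    ConvexOn ℝ Set.univ h ∧ ContDiff ℝ 1 h ∧
      ∀ W : EuclideanSpace ℝ (Fin n), gradient h W = -B (Phi W) + C W + G := by
  obtain ⟨α, hα, hAcoer⟩ := exists_pos_mul_sq_norm_le_inner_self A hApos
  have hPhi_cont : Continuous Phi :=
    continuous_of_isMinOn_quadratic hα hAcoer hKco (by fun_prop) hPhi
  set g := fun W =>
    (1 / 2 : ℝ) * ⟪A (Phi W), Phi W⟫ - ⟪F - (ContinuousLinearMap.adjoint B) W, Phi W⟫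
  -- `g W'` is at most the objective for `W'` evaluated at the old minimizer `Phi W`
  have hg_sup : ∀ W W', g W' ≤ g W + ⟪W' - W, B (Phi W)⟫ := by
    intro W W'
    have := (hPhi W').2 (Phi W) (hPhi W).1
    simp only [g, inner_sub_left, ContinuousLinearMap.adjoint_inner_left] at this ⊢
    linarith
  have hh : h = fun W => -g W + (1 / 2 : ℝ) * ⟪C W, W⟫ + ⟪G, W⟫ := by
    ext W
    simp only [hdual, Lag, g, inner_sub_left, ContinuousLinearMap.adjoint_inner_left,
      real_inner_comm (B (Phi W)) W]
    ring
  have hC0 : ∀ x, 0 ≤ ⟪C x, x⟫ := fun x => by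
    rcases eq_or_ne x 0 with rfl | hx
    · simp
    · exact (hCpos x hx).le
  have hgrad : ∀ W, HasGradientAt h (-B (Phi W) + C W + G) W := fun W => hh ▸
    (((hasGradientAt_of_le_add_inner hg_sup (by fun_prop)).neg.add
      (hasGradientAt_half_inner_apply_self hCsym)).add (hasGradientAt_inner_const G))
  refine ⟨?_, contDiff_one_of_hasGradientAt hgrad (by fun_prop), fun W => (hgrad W).gradient⟩
  rw [hh]
  exact ((concaveOn_univ_of_le_add_inner hg_sup).neg.add
    ((convexOn_univ_inner_apply_self hC0).smul (by norm_num))).add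
    ((innerₛₗ ℝ G).convexOn convex_univ)

/-- The dual functional `h(W) = −L(Φ(W), W)` is convex and continuously
differentiable with gradient `∇h(W) = −BΦ(W) + CW + G`. -/
theorem stmt_3 {m n : ℕ} (hm : 0 < m) (hn : 0 < n)
    (A : EuclideanSpace ℝ (Fin m) →L[ℝ] EuclideanSpace ℝ (Fin m))
    (hAsym : ∀ x y : EuclideanSpace ℝ (Fin m), ⟪A x, y⟫ = ⟪x, A y⟫)
    (hApos : ∀ x : EuclideanSpace ℝ (Fin m), x ≠ 0 → 0 < ⟪A x, x⟫)
    (B : EuclideanSpace ℝ (Fin m) →L[ℝ] EuclideanSpace ℝ (Fin n))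
    (C : EuclideanSpace ℝ (Fin n) →L[ℝ] EuclideanSpace ℝ (Fin n))
    (hCsym : ∀ x y : EuclideanSpace ℝ (Fin n), ⟪C x, y⟫ = ⟪x, C y⟫)
    (hCpos : ∀ x : EuclideanSpace ℝ (Fin n), x ≠ 0 → 0 < ⟪C x, x⟫)
    (F : EuclideanSpace ℝ (Fin m)) (G : EuclideanSpace ℝ (Fin n))
    (K : Set (EuclideanSpace ℝ (Fin m)))
    (hKne : K.Nonempty) (hKcl : IsClosed K) (hKco : Convex ℝ K)
    -- `Phi W` is the minimizer over `K` of `V ↦ ½⟨AV, V⟩ − ⟨F − BᵀW, V⟩`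
    (Phi : EuclideanSpace ℝ (Fin n) → EuclideanSpace ℝ (Fin m))
    (hPhi : ∀ W : EuclideanSpace ℝ (Fin n), Phi W ∈ K ∧ ∀ V ∈ K,
      (1 / 2 : ℝ) * ⟪A (Phi W), Phi W⟫ - ⟪F - (ContinuousLinearMap.adjoint B) W, Phi W⟫ ≤
        (1 / 2 : ℝ) * ⟪A V, V⟫ - ⟪F - (ContinuousLinearMap.adjoint B) W, V⟫)
    -- the dual functional `h(W) = −L(Φ(W), W)`
    (h : EuclideanSpace ℝ (Fin n) → ℝ)
    (hdual : ∀ W : EuclideanSpace ℝ (Fin n), h W = -Lag A B C F G (Phi W) W) :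
    ConvexOn ℝ Set.univ h ∧ ContDiff ℝ 1 h ∧
      ∀ W : EuclideanSpace ℝ (Fin n), gradient h W = -B (Phi W) + C W + G :=
  stmt_3_general A hApos B C hCsym hCpos F G K hKco Phi hPhi h hdual
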